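/- In the DSG method, assuming the saddle-point assumption and G(z⁽ᵏ⁾) ≠ 0 for all k, every iterate satisfies ‖z⁽ᵏ⁾ − z*‖₂ ≤ ‖z⁽⁰⁾ − z*‖₂ + 1. -/

import Mathlib

open scoped RealInnerProductSpace
open Matrix

/-- `A x` for `A` an `l × n` real matrix and `x ∈ ℝⁿ`, as Euclidean spaces. -/
noncomputable def mulVecE {l n : ℕ} (A : Matrix (Fin l) (Fin n) ℝ)
    (x : EuclideanSpace ℝ (Fin n)) : EuclideanSpace ℝ (Fin l) :=
  Matrix.toEuclideanLin A x

/-- `F(x) = (max{f₁(x),0}, …, max{f_m(x),0})`. -/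
noncomputable def Fplus {n m : ℕ} (f : Fin m → EuclideanSpace ℝ (Fin n) → ℝ)
    (x : EuclideanSpace ℝ (Fin n)) : EuclideanSpace ℝ (Fin m) :=
  (WithLp.equiv 2 (Fin m → ℝ)).symm fun i => max (f i x) 0

/-- The Lagrangian `L(x, λ, ν) = f₀(x) + λᵀF(x) + νᵀ(Ax - b)`. -/
noncomputable def Lag {n m l : ℕ} (f0 : EuclideanSpace ℝ (Fin n) → ℝ)
    (f : Fin m → EuclideanSpace ℝ (Fin n) → ℝ)
    (A : Matrix (Fin l) (Fin n) ℝ) (b : EuclideanSpace ℝ (Fin l))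
    (x : EuclideanSpace ℝ (Fin n)) (lam : EuclideanSpace ℝ (Fin m))
    (nu : EuclideanSpace ℝ (Fin l)) : ℝ :=
  f0 x + ⟪lam, Fplus f x⟫ + ⟪nu, mulVecE A x - b⟫

/-!
Write `G` for the saddle-point operator `z ↦ (∂ₓL, -∇_λ L, -∇_ν L)`. Convexity of `L` in `x` and
linearity in `(λ, ν)` give `⟪G z, z - z⋆⟫ ≥ L(x, λ⋆, ν⋆) - L(x⋆, λ, ν) ≥ 0` at every iterate; the
multipliers stay nonnegative because `s_λ` only accumulates the vectors `-F(x) ≤ 0`.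

With `a_k := β_k (z⁽ᵏ⁺¹⁾ - z⋆) = β_k (z⁽⁰⁾ - z⋆) - s⁽ᵏ⁺¹⁾` and `u` the next normalized step, this
says `⟪u, a_k⟫ ≥ 0`, so `‖a_k - u‖² ≤ ‖a_k‖² + 1`, while `a_{k+1} = a_k - u + β_k⁻¹ (z⁽⁰⁾ - z⋆)`.
Since `β_{k+1} = β_k + β_k⁻¹`, induction gives `‖a_k‖ ≤ β_k (‖z⁽⁰⁾ - z⋆‖ + 1)`.
-/

section DualAveraging

variable {E : Type*} [NormedAddCommGroup E] [InnerProductSpace ℝ E]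

lemma pos_of_succ_eq_add_one_div {β : ℕ → ℝ} (hβ0 : 0 < β 0) (hβ : ∀ k, β (k + 1) = β k + 1 / β k) :
    ∀ k, 0 < β k
  | 0 => hβ0
  | k + 1 => by
    have := pos_of_succ_eq_add_one_div hβ0 hβ k
    rw [hβ]; positivity

-- One step of dual averaging, for `a = β • (z - z⋆)` and `d = z⁽⁰⁾ - z⋆`.
lemma norm_add_inv_smul_sub_le {a d u : E} {β r : ℝ} (hβ : 0 < β) (ha : ‖a‖ ≤ β * (r + 1))
    (hd : ‖d‖ ≤ r) (hu : ‖u‖ ≤ 1) (hua : 0 ≤ ⟪u, a⟫) :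
    ‖a + β⁻¹ • d - u‖ ≤ (β + β⁻¹) * (r + 1) := by
  have hr : 0 ≤ r := (norm_nonneg d).trans hd
  have hβinv : β * β⁻¹ = 1 := mul_inv_cancel₀ hβ.ne'
  have hau : ‖a - u‖ ≤ β * (r + 1) + β⁻¹ := by
    have hsq : ‖a - u‖ ^ 2 ≤ ‖a‖ ^ 2 + 1 := by
      rw [norm_sub_sq_real, real_inner_comm]
      nlinarith [norm_nonneg u]
    refine le_of_sq_le_sq ?_ (by positivity)
    nlinarith [norm_nonneg a, inv_pos.2 hβ]
  calc ‖a + β⁻¹ • d - u‖ = ‖(a - u) + β⁻¹ • d‖ := by rw [sub_add_eq_add_sub]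
    _ ≤ ‖a - u‖ + β⁻¹ * ‖d‖ := by
      grw [norm_add_le, norm_smul, Real.norm_of_nonneg (inv_nonneg.2 hβ.le)]
    _ ≤ β * (r + 1) + β⁻¹ + β⁻¹ * r := by gcongr
    _ = (β + β⁻¹) * (r + 1) := by ring

theorem norm_sub_le_of_dualAveraging {z s u : ℕ → E} {zstar : E} {β : ℕ → ℝ}
    (hβ0 : β 0 = 1) (hβ : ∀ k, β (k + 1) = β k + 1 / β k)
    (hs0 : s 0 = 0) (hs : ∀ k, s (k + 1) = s k + u k)
    (hz : ∀ k, z (k + 1) = z 0 - (β k)⁻¹ • s (k + 1))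
    (hu : ∀ k, ‖u k‖ ≤ 1) (hmono : ∀ k, 0 ≤ ⟪u k, z k - zstar⟫) (k : ℕ) :
    ‖z k - zstar‖ ≤ ‖z 0 - zstar‖ + 1 := by
  have hβpos := pos_of_succ_eq_add_one_div (hβ0 ▸ one_pos) hβ
  set d := z 0 - zstar
  set a : ℕ → E := fun k => β k • d - s (k + 1) with ha
  have hza : ∀ k, z (k + 1) - zstar = (β k)⁻¹ • a k := fun k => by
    rw [hz, ha, smul_sub, inv_smul_smul₀ (hβpos k).ne', sub_right_comm]
  have hbound : ∀ k, ‖a k‖ ≤ β k * (‖d‖ + 1) := by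
    intro k
    induction k with
    | zero =>
      simp only [ha, hβ0, one_smul, one_mul, zero_add, hs, hs0]
      exact (norm_sub_le _ _).trans (by gcongr; exact hu 0)
    | succ k ih =>
      have hstep : a (k + 1) = a k + (β k)⁻¹ • d - u (k + 1) := by
        simp only [ha, hβ, hs, one_div, add_smul]
        abel
      have hua : 0 ≤ ⟪u (k + 1), a k⟫ := by
        have := hmono (k + 1)
        rwa [hza, real_inner_smul_right, mul_nonneg_iff_of_pos_left (inv_pos.2 (hβpos k))] at this
      rw [hstep, hβ, one_div]
      exact norm_add_inv_smul_sub_le (hβpos k) ih le_rfl (hu _) hua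
  cases k with
  | zero => exact le_add_of_nonneg_right zero_le_one
  | succ k =>
    rw [hza, norm_smul, Real.norm_of_nonneg (inv_nonneg.2 (hβpos k).le),
      inv_mul_le_iff₀ (hβpos k)]
    exact hbound k

end DualAveraging

section L2Triple

variable {X Y W : Type*} [NormedAddCommGroup X] [NormedAddCommGroup Y] [NormedAddCommGroup W]

def l2Triple (x : X) (y : Y) (w : W) : WithLp 2 (X × WithLp 2 (Y × W)) :=
  WithLp.toLp 2 (x, WithLp.toLp 2 (y, w))

lemma l2Triple_add (x x' : X) (y y' : Y) (w w' : W) :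
    l2Triple x y w + l2Triple x' y' w' = l2Triple (x + x') (y + y') (w + w') := rfl

lemma l2Triple_sub (x x' : X) (y y' : Y) (w w' : W) :
    l2Triple x y w - l2Triple x' y' w' = l2Triple (x - x') (y - y') (w - w') := rfl

lemma l2Triple_smul [NormedSpace ℝ X] [NormedSpace ℝ Y] [NormedSpace ℝ W]
    (c : ℝ) (x : X) (y : Y) (w : W) :
    c • l2Triple x y w = l2Triple (c • x) (c • y) (c • w) := rfl

lemma l2Triple_zero : l2Triple (0 : X) (0 : Y) (0 : W) = 0 := rfl

lemma norm_l2Triple (x : X) (y : Y) (w : W) :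
    ‖l2Triple x y w‖ = √(‖x‖ ^ 2 + ‖y‖ ^ 2 + ‖w‖ ^ 2) := by
  rw [← Real.sqrt_sq (norm_nonneg _), WithLp.prod_norm_sq_eq_of_L2, l2Triple,
    WithLp.prod_norm_sq_eq_of_L2, add_assoc]
  rfl

lemma inner_l2Triple [InnerProductSpace ℝ X] [InnerProductSpace ℝ Y] [InnerProductSpace ℝ W]
    (x x' : X) (y y' : Y) (w w' : W) :
    ⟪l2Triple x y w, l2Triple x' y' w'⟫ = ⟪x, x'⟫ + ⟪y, y'⟫ + ⟪w, w'⟫ := by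
  rw [l2Triple, WithLp.prod_inner_apply, WithLp.prod_inner_apply, add_assoc]
  rfl

end L2Triple

section Lagrangian

variable {n m l : ℕ}

lemma inner_mulVecE_transpose (A : Matrix (Fin l) (Fin n) ℝ) (v : EuclideanSpace ℝ (Fin l))
    (x : EuclideanSpace ℝ (Fin n)) : ⟪mulVecE Aᵀ v, x⟫ = ⟪v, mulVecE A x⟫ := by
  rw [mulVecE, ← conjTranspose_eq_transpose_of_trivial, toEuclideanLin_conjTranspose_eq_adjoint,
    LinearMap.adjoint_inner_left]
  rfl

lemma inner_Fplus (f : Fin m → EuclideanSpace ℝ (Fin n) → ℝ) (lam : EuclideanSpace ℝ (Fin m))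
    (x : EuclideanSpace ℝ (Fin n)) : ⟪lam, Fplus f x⟫ = ∑ i, lam i * max (f i x) 0 := by
  simp only [PiLp.inner_apply, RCLike.inner_apply, conj_trivial, Fplus]
  exact Finset.sum_congr rfl fun i _ => mul_comm _ _

variable (f0 : EuclideanSpace ℝ (Fin n) → ℝ) (f : Fin m → EuclideanSpace ℝ (Fin n) → ℝ)
  (A : Matrix (Fin l) (Fin n) ℝ) (b : EuclideanSpace ℝ (Fin l))

lemma Lag_sub_Lag_le_inner {x xs v0 : EuclideanSpace ℝ (Fin n)}
    {v : Fin m → EuclideanSpace ℝ (Fin n)}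
    {lam : EuclideanSpace ℝ (Fin m)} (nu : EuclideanSpace ℝ (Fin l))
    (hv0 : ⟪v0, xs - x⟫ ≤ f0 xs - f0 x) (hv : ∀ i, ⟪v i, xs - x⟫ ≤ max (f i xs) 0 - max (f i x) 0)
    (hlam : ∀ i, 0 ≤ lam i) :
    Lag f0 f A b x lam nu - Lag f0 f A b xs lam nu
      ≤ ⟪v0 + ∑ i, lam i • v i + mulVecE Aᵀ nu, x - xs⟫ := by
  have hsum : ∑ i, lam i * (max (f i x) 0 - max (f i xs) 0) ≤ ∑ i, lam i * ⟪v i, x - xs⟫ := by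
    refine Finset.sum_le_sum fun i _ => mul_le_mul_of_nonneg_left ?_ (hlam i)
    have := hv i
    rw [inner_sub_right] at this ⊢
    linarith
  simp only [Lag, inner_Fplus, inner_add_left, sum_inner, real_inner_smul_left,
    inner_mulVecE_transpose, inner_sub_right, mul_sub, Finset.sum_sub_distrib] at hv0 hsum ⊢
  linarith

lemma Lag_sub_Lag_eq_inner (x : EuclideanSpace ℝ (Fin n)) (lam lams : EuclideanSpace ℝ (Fin m))
    (nu nus : EuclideanSpace ℝ (Fin l)) :
    Lag f0 f A b x lams nus - Lag f0 f A b x lam nu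
      = ⟪-Fplus f x, lam - lams⟫ + ⟪-(mulVecE A x - b), nu - nus⟫ := by
  simp only [Lag, inner_neg_left, inner_sub_right, real_inner_comm (Fplus f x),
    real_inner_comm (mulVecE A x - b)]
  ring

-- Monotonicity of the saddle-point operator `G`.
lemma Lag_sub_Lag_le_inner_gradient {x xs v0 : EuclideanSpace ℝ (Fin n)}
    {v : Fin m → EuclideanSpace ℝ (Fin n)} {lam : EuclideanSpace ℝ (Fin m)}
    (lams : EuclideanSpace ℝ (Fin m)) (nu nus : EuclideanSpace ℝ (Fin l))
    (hv0 : ⟪v0, xs - x⟫ ≤ f0 xs - f0 x) (hv : ∀ i, ⟪v i, xs - x⟫ ≤ max (f i xs) 0 - max (f i x) 0)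
    (hlam : ∀ i, 0 ≤ lam i) :
    Lag f0 f A b x lams nus - Lag f0 f A b xs lam nu
      ≤ ⟪v0 + ∑ i, lam i • v i + mulVecE Aᵀ nu, x - xs⟫ + ⟪-Fplus f x, lam - lams⟫
        + ⟪-(mulVecE A x - b), nu - nus⟫ := by
  linarith [Lag_sub_Lag_le_inner f0 f A b nu hv0 hv hlam,
    Lag_sub_Lag_eq_inner f0 f A b x lam lams nu nus]

end Lagrangian

lemma nonneg_of_dualAveraging {ι : Type*} {lam s F : ℕ → EuclideanSpace ℝ ι} {c β : ℕ → ℝ}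
    (hlam0 : ∀ i, 0 ≤ lam 0 i) (hs0 : s 0 = 0) (hs : ∀ k, s (k + 1) = s k + c k • -F k)
    (hc : ∀ k, 0 ≤ c k) (hF : ∀ k i, 0 ≤ F k i) (hβ : ∀ k, 0 ≤ β k)
    (hlam : ∀ k, lam (k + 1) = lam 0 - (β k)⁻¹ • s (k + 1)) (k : ℕ) (i : ι) : 0 ≤ lam k i := by
  have hs_nonpos : ∀ k, s k i ≤ 0 := by
    intro k
    induction k with
    | zero => simp [hs0]
    | succ k ih =>
      rw [hs]
      simp only [PiLp.add_apply, PiLp.smul_apply, PiLp.neg_apply, smul_eq_mul]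
      nlinarith [hc k, hF k i]
  cases k with
  | zero => exact hlam0 i
  | succ k =>
    rw [hlam]
    simp only [PiLp.sub_apply, PiLp.smul_apply, smul_eq_mul]
    nlinarith [hlam0 i, inv_nonneg.2 (hβ k), hs_nonpos (k + 1)]

theorem dsg_iterates_bounded_general
    (n m l : ℕ)
    (f0 : EuclideanSpace ℝ (Fin n) → ℝ)
    (f : Fin m → EuclideanSpace ℝ (Fin n) → ℝ)
    (A : Matrix (Fin l) (Fin n) ℝ) (b : EuclideanSpace ℝ (Fin l))
    (pstar : ℝ)
    (xstar : EuclideanSpace ℝ (Fin n))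
    (lamstar : EuclideanSpace ℝ (Fin m)) (nustar : EuclideanSpace ℝ (Fin l))
    -- saddle-point assumption
    (hsaddle1 : ∀ (lam : EuclideanSpace ℝ (Fin m)) (nu : EuclideanSpace ℝ (Fin l)),
      (∀ i, 0 ≤ lam i) → Lag f0 f A b xstar lam nu ≤ pstar)
    (hsaddle2 : ∀ x, pstar ≤ Lag f0 f A b x lamstar nustar)
    -- fixed subgradient selections g₀(x) ∈ ∂f₀(x), gᵢ(x) ∈ ∂Fᵢ(x)
    (g0 : EuclideanSpace ℝ (Fin n) → EuclideanSpace ℝ (Fin n))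
    (hg0 : ∀ x y, ⟪g0 x, y - x⟫ ≤ f0 y - f0 x)
    (g : Fin m → EuclideanSpace ℝ (Fin n) → EuclideanSpace ℝ (Fin n))
    (hg : ∀ i x y, ⟪g i x, y - x⟫ ≤ max (f i y) 0 - max (f i x) 0)
    -- the DSG iterates z⁽ᵏ⁾ = (x⁽ᵏ⁾, λ⁽ᵏ⁾, ν⁽ᵏ⁾)
    (xk : ℕ → EuclideanSpace ℝ (Fin n))
    (lamk : ℕ → EuclideanSpace ℝ (Fin m))
    (nuk : ℕ → EuclideanSpace ℝ (Fin l))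
    (hlam0 : ∀ i, 0 ≤ lamk 0 i)
    -- G(z⁽ᵏ⁾): primal component Gx k and total Euclidean norm nG k
    (Gx : ℕ → EuclideanSpace ℝ (Fin n))
    (hGx : ∀ k, Gx k
      = g0 (xk k) + (∑ i, lamk k i • g i (xk k)) + mulVecE Aᵀ (nuk k))
    (nG : ℕ → ℝ)
    (hnG : ∀ k, nG k = Real.sqrt (‖Gx k‖ ^ 2 + ‖Fplus f (xk k)‖ ^ 2
      + ‖mulVecE A (xk k) - b‖ ^ 2))
    -- the averaging sequences s⁽ᵏ⁾ and weights β
    (sx : ℕ → EuclideanSpace ℝ (Fin n))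
    (slam : ℕ → EuclideanSpace ℝ (Fin m))
    (snu : ℕ → EuclideanSpace ℝ (Fin l))
    (hs0 : sx 0 = 0 ∧ slam 0 = 0 ∧ snu 0 = 0)
    (hsx : ∀ k, sx (k + 1) = sx k + (nG k)⁻¹ • Gx k)
    (hslam : ∀ k, slam (k + 1) = slam k + (nG k)⁻¹ • (-(Fplus f (xk k))))
    (hsnu : ∀ k, snu (k + 1) = snu k + (nG k)⁻¹ • (-(mulVecE A (xk k) - b)))
    (β : ℕ → ℝ) (hβ0 : β 0 = 1) (hβ : ∀ k, β (k + 1) = β k + 1 / β k)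
    (hxk : ∀ k, xk (k + 1) = xk 0 - (β k)⁻¹ • sx (k + 1))
    (hlamk : ∀ k, lamk (k + 1) = lamk 0 - (β k)⁻¹ • slam (k + 1))
    (hnuk : ∀ k, nuk (k + 1) = nuk 0 - (β k)⁻¹ • snu (k + 1))
    :
    ∀ k : ℕ,
      Real.sqrt (‖xk k - xstar‖ ^ 2 + ‖lamk k - lamstar‖ ^ 2 + ‖nuk k - nustar‖ ^ 2)
        ≤ Real.sqrt (‖xk 0 - xstar‖ ^ 2 + ‖lamk 0 - lamstar‖ ^ 2
            + ‖nuk 0 - nustar‖ ^ 2) + 1 := by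
  have hβpos := pos_of_succ_eq_add_one_div (hβ0 ▸ one_pos) hβ
  have hnG_inv_nonneg : ∀ k, 0 ≤ (nG k)⁻¹ := fun k => inv_nonneg.2 (hnG k ▸ Real.sqrt_nonneg _)
  have hlam : ∀ k i, 0 ≤ lamk k i := nonneg_of_dualAveraging hlam0 hs0.2.1 hslam hnG_inv_nonneg
    (fun k i => le_max_right (f i (xk k)) 0) (fun k => (hβpos k).le) hlamk
  set G := fun k => l2Triple (Gx k) (-Fplus f (xk k)) (-(mulVecE A (xk k) - b)) with hG
  have hGnorm : ∀ k, ‖G k‖ = nG k := fun k => by rw [hG, norm_l2Triple, norm_neg, norm_neg, hnG]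
  have hmono :
      ∀ k, 0 ≤ ⟪G k, l2Triple (xk k) (lamk k) (nuk k) - l2Triple xstar lamstar nustar⟫ := by
    intro k
    have := Lag_sub_Lag_le_inner_gradient f0 f A b lamstar (nuk k) nustar (hg0 (xk k) xstar)
      (hg · (xk k) xstar) (hlam k)
    rw [← hGx] at this
    rw [l2Triple_sub, inner_l2Triple]
    linarith [hsaddle1 (lamk k) (nuk k) (hlam k), hsaddle2 (xk k)]
  intro k
  rw [← norm_l2Triple, ← norm_l2Triple, ← l2Triple_sub, ← l2Triple_sub]
  refine norm_sub_le_of_dualAveraging (z := fun k => l2Triple (xk k) (lamk k) (nuk k))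
    (s := fun k => l2Triple (sx k) (slam k) (snu k)) (u := fun k => (nG k)⁻¹ • G k)
    hβ0 hβ ?_ ?_ ?_ ?_ ?_ k
  · simp only [hs0, l2Triple_zero]
  · intro k
    simp only [hsx, hslam, hsnu, hG, l2Triple_add, l2Triple_smul]
  · intro k
    simp only [hxk, hlamk, hnuk, l2Triple_sub, l2Triple_smul]
  · intro k
    rw [norm_smul, hGnorm, Real.norm_of_nonneg (hnG_inv_nonneg k)]
    exact inv_mul_le_one
  · intro k
    rw [real_inner_smul_left]
    exact mul_nonneg (hnG_inv_nonneg k) (hmono k)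

/-- DSG iterates stay in the ball: `‖z⁽ᵏ⁾ - z*‖₂ ≤ ‖z⁽⁰⁾ - z*‖₂ + 1`. -/
theorem dsg_iterates_bounded
    (n m l : ℕ)
    (f0 : EuclideanSpace ℝ (Fin n) → ℝ)
    (f : Fin m → EuclideanSpace ℝ (Fin n) → ℝ)
    (hf0 : ConvexOn ℝ Set.univ f0)
    (hf : ∀ i, ConvexOn ℝ Set.univ (f i))
    (A : Matrix (Fin l) (Fin n) ℝ) (b : EuclideanSpace ℝ (Fin l))
    (pstar : ℝ)
    (xstar : EuclideanSpace ℝ (Fin n))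
    (lamstar : EuclideanSpace ℝ (Fin m)) (nustar : EuclideanSpace ℝ (Fin l))
    -- x* is primal optimal with value p*
    (hxfeas : ∀ i, f i xstar ≤ 0) (hxeq : mulVecE A xstar = b)
    (hxval : f0 xstar = pstar)
    -- saddle-point assumption
    (hlamstar : ∀ i, 0 ≤ lamstar i)
    (hsaddle_eq : Lag f0 f A b xstar lamstar nustar = pstar)
    (hsaddle1 : ∀ (lam : EuclideanSpace ℝ (Fin m)) (nu : EuclideanSpace ℝ (Fin l)),
      (∀ i, 0 ≤ lam i) → Lag f0 f A b xstar lam nu ≤ pstar)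
    (hsaddle2 : ∀ x, pstar ≤ Lag f0 f A b x lamstar nustar)
    -- fixed subgradient selections g₀(x) ∈ ∂f₀(x), gᵢ(x) ∈ ∂Fᵢ(x)
    (g0 : EuclideanSpace ℝ (Fin n) → EuclideanSpace ℝ (Fin n))
    (hg0 : ∀ x y, ⟪g0 x, y - x⟫ ≤ f0 y - f0 x)
    (g : Fin m → EuclideanSpace ℝ (Fin n) → EuclideanSpace ℝ (Fin n))
    (hg : ∀ i x y, ⟪g i x, y - x⟫ ≤ max (f i y) 0 - max (f i x) 0)
    -- the DSG iterates z⁽ᵏ⁾ = (x⁽ᵏ⁾, λ⁽ᵏ⁾, ν⁽ᵏ⁾)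
    (xk : ℕ → EuclideanSpace ℝ (Fin n))
    (lamk : ℕ → EuclideanSpace ℝ (Fin m))
    (nuk : ℕ → EuclideanSpace ℝ (Fin l))
    (hlam0 : ∀ i, 0 ≤ lamk 0 i)
    -- G(z⁽ᵏ⁾): primal component Gx k and total Euclidean norm nG k
    (Gx : ℕ → EuclideanSpace ℝ (Fin n))
    (hGx : ∀ k, Gx k
      = g0 (xk k) + (∑ i, lamk k i • g i (xk k)) + mulVecE Aᵀ (nuk k))
    (nG : ℕ → ℝ)
    (hnG : ∀ k, nG k = Real.sqrt (‖Gx k‖ ^ 2 + ‖Fplus f (xk k)‖ ^ 2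
      + ‖mulVecE A (xk k) - b‖ ^ 2))
    -- G(z⁽ᵏ⁾) ≠ 0
    (hGne : ∀ k, ¬ (Gx k = 0 ∧ Fplus f (xk k) = 0 ∧ mulVecE A (xk k) - b = 0))
    -- the averaging sequences s⁽ᵏ⁾ and weights β
    (sx : ℕ → EuclideanSpace ℝ (Fin n))
    (slam : ℕ → EuclideanSpace ℝ (Fin m))
    (snu : ℕ → EuclideanSpace ℝ (Fin l))
    (hs0 : sx 0 = 0 ∧ slam 0 = 0 ∧ snu 0 = 0)
    (hsx : ∀ k, sx (k + 1) = sx k + (nG k)⁻¹ • Gx k)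
    (hslam : ∀ k, slam (k + 1) = slam k + (nG k)⁻¹ • (-(Fplus f (xk k))))
    (hsnu : ∀ k, snu (k + 1) = snu k + (nG k)⁻¹ • (-(mulVecE A (xk k) - b)))
    (β : ℕ → ℝ) (hβ0 : β 0 = 1) (hβ : ∀ k, β (k + 1) = β k + 1 / β k)
    (hxk : ∀ k, xk (k + 1) = xk 0 - (β k)⁻¹ • sx (k + 1))
    (hlamk : ∀ k, lamk (k + 1) = lamk 0 - (β k)⁻¹ • slam (k + 1))
    (hnuk : ∀ k, nuk (k + 1) = nuk 0 - (β k)⁻¹ • snu (k + 1))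
    :
    ∀ k : ℕ,
      Real.sqrt (‖xk k - xstar‖ ^ 2 + ‖lamk k - lamstar‖ ^ 2 + ‖nuk k - nustar‖ ^ 2)
        ≤ Real.sqrt (‖xk 0 - xstar‖ ^ 2 + ‖lamk 0 - lamstar‖ ^ 2
            + ‖nuk 0 - nustar‖ ^ 2) + 1 :=
  dsg_iterates_bounded_general n m l f0 f A b pstar xstar lamstar nustar hsaddle1 hsaddle2 g0 hg0 g
    hg xk lamk nuk hlam0 Gx hGx nG hnG sx slam snu hs0 hsx hslam hsnu β hβ0 hβ hxk hlamk hnuk
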